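/- Let n ≥ 6 and let G be a connected simple graph on n vertices having a Laplacian eigenvalue of multiplicity n − 3. Then G contains no induced subgraph isomorphic to J₃, the graph on five vertices v₁, v₂, v₃, v₄, u whose edges are exactly v₁v₂, v₂v₃, v₃v₄, uv₁, uv₂, uv₃, uv₄ (that is, the join K₁∇P₄ of a single vertex with the path on four vertices). -/

import Mathlib

/-!
The Laplacian is symmetric, so the algebraic multiplicity `n - 3` of `α` is the dimension of its
eigenspace. As `G` is connected, the eigenvalue `0` is simple, hence `α ≠ 0` and every
`α`-eigenvector sums to zero. An eigenspace of dimension `n - 3` meets the 4-dimensional space of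
vectors supported on the copy of `{v₁, v₂, v₄, u}` nontrivially; but for such a vector the zero
sum and the eigenvalue equations at `v₃`, `v₁`, `v₄` successively kill the entries at `v₁`, `v₄`,
`u` and `v₂`.
-/

/-- The graph `J₃ = K₁ ∇ P₄` on five vertices `v₁, v₂, v₃, v₄, u`
(labelled `0, 1, 2, 3, 4`), whose edges are exactly
`v₁v₂, v₂v₃, v₃v₄, uv₁, uv₂, uv₃, uv₄`. -/
def J3 : SimpleGraph (Fin 5) :=
  SimpleGraph.fromEdgeSet {s(0, 1), s(1, 2), s(2, 3), s(4, 0), s(4, 1), s(4, 2), s(4, 3)}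

open Module Module.End Matrix

namespace Matrix.IsHermitian

variable {𝕜 n : Type*} [RCLike 𝕜] [Fintype n] [DecidableEq n] {A : Matrix n n 𝕜}

theorem isSemisimple_toLin' (hA : A.IsHermitian) : Module.End.IsSemisimple (toLin' A) := by
  refine (LinearEquiv.isSemisimple_iff _ (toEuclideanLin A) (WithLp.linearEquiv 2 𝕜 (n → 𝕜)).symm
    ?_).mpr ?_
  · ext x : 1
    rfl
  · exact isFinitelySemisimple_iff_isSemisimple.mp
      (isSymmetric_toEuclideanLin_iff.mpr hA).isFinitelySemisimple

theorem finrank_eigenspace_toLin' (hA : A.IsHermitian) (μ : 𝕜) :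
    finrank 𝕜 (eigenspace (toLin' A) μ) = A.charpoly.rootMultiplicity μ := by
  rw [← hA.isSemisimple_toLin'.isFinitelySemisimple.maxGenEigenspace_eq_eigenspace,
    LinearMap.finrank_maxGenEigenspace_eq, Matrix.charpoly_toLin']

end Matrix.IsHermitian

theorem Submodule.exists_ne_zero_mem_forall_notMem_eq_zero {K V : Type*} [Field K] [Fintype V]
    (W : Submodule K (V → K)) (s : Finset V) (h : Fintype.card V < finrank K W + s.card) :
    ∃ x ∈ W, x ≠ 0 ∧ ∀ v ∉ s, x v = 0 := by
  classical
  set Z : Submodule K (V → K) := ⨅ v ∈ (↑s : Set V)ᶜ, LinearMap.ker (LinearMap.proj v)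
  have hZ : finrank K Z = s.card := by
    rw [(LinearMap.iInfKerProjEquiv K (fun _ ↦ K) disjoint_compl_right
      (by simp)).finrank_eq]
    simp
  have hWZ : ¬ Disjoint W Z := fun hd ↦ by
    have := Submodule.finrank_add_finrank_le_of_disjoint hd
    rw [hZ, finrank_fintype_fun_eq_card] at this
    omega
  obtain ⟨x, ⟨hxW, hxZ⟩, hx⟩ := Submodule.ne_bot_iff _ |>.mp (disjoint_iff.not.mp hWZ)
  refine ⟨x, hxW, hx, fun v hv ↦ ?_⟩
  simpa [hv] using Submodule.mem_iInf _ |>.mp hxZ v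

namespace SimpleGraph

variable {V : Type*} [Fintype V] [DecidableEq V] {G : SimpleGraph V} [DecidableRel G.Adj]
  {R : Type*} [CommRing R]

theorem sum_eq_zero_of_lapMatrix_mulVec_eq_smul [NoZeroDivisors R] {α : R} (hα : α ≠ 0)
    {x : V → R} (hx : G.lapMatrix R *ᵥ x = α • x) : ∑ v, x v = 0 := by
  refine (mul_eq_zero.mp ?_).resolve_left hα
  calc α * ∑ v, x v = (fun _ ↦ 1) ⬝ᵥ (G.lapMatrix R *ᵥ x) := by
        simp [hx, dotProduct, Finset.mul_sum]
    _ = (G.lapMatrix R *ᵥ fun _ ↦ 1) ⬝ᵥ x := by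
        rw [dotProduct_mulVec, ← mulVec_transpose, (G.isSymm_lapMatrix R).eq]
    _ = 0 := by rw [G.lapMatrix_mulVec_const_eq_zero, zero_dotProduct]

theorem Connected.finrank_eigenspace_zero_lapMatrix (h : G.Connected) :
    finrank ℝ (eigenspace (toLin' (G.lapMatrix ℝ)) 0) = 1 := by
  have : Nonempty V := h.nonempty
  rw [eigenspace_zero, ← card_connectedComponent_eq_finrank_ker_toLin'_lapMatrix]
  exact le_antisymm
    (Fintype.card_le_one_iff_subsingleton.mpr h.preconnected.subsingleton_connectedComponent)
    Fintype.card_pos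

theorem Embedding.lapMatrix_mulVec_apply {W : Type*} [Fintype W] {H : SimpleGraph W}
    [DecidableRel H.Adj] (e : H ↪g G) {x : V → R} (hx : ∀ v ∉ Set.range e, x v = 0) (w : W) :
    (G.lapMatrix R *ᵥ x) (e w) =
      G.degree (e w) * x (e w) - ∑ u, if H.Adj w u then x (e u) else 0 := by
  rw [G.lapMatrix_mulVec_apply, neighborFinset_eq_filter, Finset.sum_filter]
  congr 1
  exact (Fintype.sum_of_injective e e.injective _ _ (fun v hv ↦ by simp [hx v hv])
    fun u ↦ by simp).symm

theorem eq_zero_of_lapMatrix_mulVec_eq_smul_of_embedding_J3 [NoZeroDivisors R] (e : J3 ↪g G)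
    {α : R} (hα : α ≠ 0) {x : V → R} (hx : G.lapMatrix R *ᵥ x = α • x)
    (hsupp : ∀ v ∉ ({0, 1, 3, 4} : Finset (Fin 5)).map e.toEmbedding, x v = 0) : x = 0 := by
  classical
  have hrange : ∀ v ∉ Set.range e, x v = 0 := fun v hv ↦ hsupp v fun hv' ↦ hv <| by
    obtain ⟨i, -, rfl⟩ := Finset.mem_map.mp hv'
    exact Set.mem_range_self i
  have hx2 : x (e 2) = 0 := hsupp _ (by simp)
  have hsum : x (e 0) + x (e 1) + x (e 3) + x (e 4) = 0 := by
    have := sum_eq_zero_of_lapMatrix_mulVec_eq_smul hα hx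
    rw [← Fintype.sum_of_injective e e.injective (x ∘ e) x hrange (fun _ ↦ rfl)] at this
    simpa only [Fin.sum_univ_five, Function.comp_apply, hx2, add_zero] using this
  have heq (i : Fin 5) : α * x (e i) =
      G.degree (e i) * x (e i) - ∑ j, if J3.Adj i j then x (e j) else 0 := by
    rw [← e.lapMatrix_mulVec_apply hrange, hx, Pi.smul_apply, smul_eq_mul]
  have h0 : α * x (e 0) = G.degree (e 0) * x (e 0) - (x (e 1) + x (e 4)) := by
    simpa [Fin.sum_univ_five, J3] using heq 0
  have h2 : α * x (e 2) = G.degree (e 2) * x (e 2) - (x (e 1) + x (e 3) + x (e 4)) := by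
    simpa [Fin.sum_univ_five, J3] using heq 2
  have h3 : α * x (e 3) = G.degree (e 3) * x (e 3) - (x (e 2) + x (e 4)) := by
    simpa [Fin.sum_univ_five, J3] using heq 3
  have hx0 : x (e 0) = 0 := by linear_combination hsum - h2 + (α - G.degree (e 2)) * hx2
  have hx3 : x (e 3) = 0 := by
    linear_combination h2 - (α - G.degree (e 2)) * hx2 - h0 + (α - G.degree (e 0)) * hx0
  have hx4 : x (e 4) = 0 := by linear_combination h3 - (α - G.degree (e 3)) * hx3 - hx2
  have hx1 : x (e 1) = 0 := by linear_combination h0 - (α - G.degree (e 0)) * hx0 - hx4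
  funext v
  by_cases hv : v ∈ Set.range e
  · obtain ⟨i, rfl⟩ := hv
    fin_cases i <;> assumption
  · exact hrange v hv

end SimpleGraph

theorem no_induced_J3_of_laplacian_multiplicity_general
    (n : ℕ)
    (G : SimpleGraph (Fin n)) [DecidableRel G.Adj] (hconn : G.Connected)
    (hmult : ∃ α : ℝ, ((G.lapMatrix ℝ).charpoly.rootMultiplicity α) = n - 3) :
    ¬ ∃ f : Fin 5 → Fin n, Function.Injective f ∧
        ∀ i j, G.Adj (f i) (f j) ↔ J3.Adj i j := by
  rintro ⟨f, hf, hadj⟩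
  obtain ⟨α, hα⟩ := hmult
  let e : J3 ↪g G := ⟨⟨f, hf⟩, hadj _ _⟩
  have hn : 5 ≤ n := by simpa using Fintype.card_le_of_injective f hf
  have hW : finrank ℝ (eigenspace (toLin' (G.lapMatrix ℝ)) α) = n - 3 := by
    rw [(G.isHermitian_lapMatrix ℝ).finrank_eigenspace_toLin', hα]
  have hα0 : α ≠ 0 := by
    rintro rfl
    have := hconn.finrank_eigenspace_zero_lapMatrix
    omega
  have hs : (({0, 1, 3, 4} : Finset (Fin 5)).map e.toEmbedding).card = 4 := by
    rw [Finset.card_map]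
    rfl
  obtain ⟨x, hxW, hx0, hsupp⟩ :=
    (eigenspace (toLin' (G.lapMatrix ℝ)) α).exists_ne_zero_mem_forall_notMem_eq_zero _
      (by rw [Fintype.card_fin, hW, hs]; omega)
  exact hx0 <| SimpleGraph.eq_zero_of_lapMatrix_mulVec_eq_smul_of_embedding_J3 e hα0
    (mem_eigenspace_iff.mp hxW) hsupp

/-- Let `n ≥ 6` and let `G` be a connected simple graph on `n` vertices having a
Laplacian eigenvalue of multiplicity `n − 3`. Then `G` contains no induced subgraph
isomorphic to `J₃`. -/
theorem no_induced_J3_of_laplacian_multiplicity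
    (n : ℕ) (hn : 6 ≤ n)
    (G : SimpleGraph (Fin n)) [DecidableRel G.Adj] (hconn : G.Connected)
    (hmult : ∃ α : ℝ, ((G.lapMatrix ℝ).charpoly.rootMultiplicity α) = n - 3) :
    ¬ ∃ f : Fin 5 → Fin n, Function.Injective f ∧
        ∀ i j, G.Adj (f i) (f j) ↔ J3.Adj i j :=
  no_induced_J3_of_laplacian_multiplicity_general n G hconn hmult
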